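/- Let aᵢⱼ ≥ 0 (1 ≤ i ≠ j ≤ N) be weights with associated Laplacian matrix L ∈ ℝ^{N×N}, and let d₁, …, d_N ≥ 0 with D = diag(d₁, …, d_N). Consider the weighted digraph on nodes {0, 1, …, N} with an edge from node j to node i (1 ≤ i, j ≤ N) whenever aᵢⱼ > 0 and an edge from node 0 to node i whenever dᵢ > 0. If this digraph contains a directed spanning tree rooted at node 0, then every eigenvalue of L + D over ℂ has positive real part; in particular L + D is a nonsingular M-matrix. -/

import Mathlib

/-!
`M = L + D` is a Z-matrix whose `i`-th row sums to `dᵢ ≥ 0`. Suppose `M v = μ v` with `v ≠ 0` and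
`Re μ ≤ 0`. At an index `i` where `‖vᵢ‖` is maximal, the `i`-th row of `M v = μ v` and the triangle
inequality give `dᵢ ≤ Re μ ≤ 0`, and equality there forces `‖vⱼ‖ = ‖vᵢ‖` for every `j` with an edge
`j → i`. So the maximal indices are closed under taking predecessors and all have `dᵢ = 0`; but
walking back from one of them along the spanning tree reaches a child `k` of the root, where
`d_k > 0`.
-/

open Finset Matrix

theorem Relation.ReflTransGen.exists_some_path_of_none {α : Type*}
    {R : Option α → Option α → Prop} {i : α} (h : Relation.ReflTransGen R none (some i)) :
    ∃ k, R none (some k) ∧ Relation.ReflTransGen (fun j i => R (some j) (some i)) k i := by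
  generalize hc : some i = c at h
  induction h generalizing i with
  | refl => cases hc
  | @tail b c _ hbc ih =>
    subst hc
    cases b with
    | none => exact ⟨i, hbc, .refl⟩
    | some j =>
      obtain ⟨k, hk, hkj⟩ := ih rfl
      exact ⟨k, hk, hkj.tail hbc⟩

namespace Matrix

variable {n : Type*}

def IsZMatrix {R : Type*} [Zero R] [LE R] (M : Matrix n n R) : Prop :=
  ∀ i j, i ≠ j → M i j ≤ 0

namespace IsZMatrix

variable {M : Matrix n n ℝ} {v : n → ℂ}

theorem neg_apply_nonneg (hM : M.IsZMatrix) {i j : n} (hji : j ≠ i) : 0 ≤ -M i j :=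
  neg_nonneg.mpr (hM i j hji.symm)

theorem neg_apply_mul_norm_sub_nonpos (hM : M.IsZMatrix) {i : n} (hmax : ∀ j, ‖v j‖ ≤ ‖v i‖)
    {j : n} (hji : j ≠ i) : -M i j * (‖v j‖ - ‖v i‖) ≤ 0 :=
  mul_nonpos_of_nonneg_of_nonpos (hM.neg_apply_nonneg hji) (sub_nonpos.mpr (hmax j))

end IsZMatrix

variable [Fintype n] [DecidableEq n]

theorem exists_mulVec_eq_smul_of_isRoot_charpoly {K : Type*} [Field K] {A : Matrix n n K} {μ : K}
    (hμ : A.charpoly.IsRoot μ) : ∃ v ≠ 0, A *ᵥ v = μ • v := by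
  rw [← charpoly_toLin', ← Module.End.hasEigenvalue_iff_isRoot_charpoly] at hμ
  obtain ⟨v, hv, hv0⟩ := hμ.exists_hasEigenvector
  exact ⟨v, hv0, by simpa using Module.End.mem_eigenspace_iff.mp hv⟩

theorem sum_apply_eq_zero_of_laplacian {R : Type*} [AddCommGroup R] {a : n → n → R}
    {L : Matrix n n R} (hLdiag : ∀ i, L i i = ∑ j ∈ univ.erase i, a i j)
    (hLoff : ∀ i j, i ≠ j → L i j = -a i j) (i : n) : ∑ j, L i j = 0 := by
  rw [← add_sum_erase _ _ (mem_univ i), hLdiag, ← sum_add_distrib]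
  exact sum_eq_zero fun j hj => by rw [hLoff i j (ne_of_mem_erase hj).symm, add_neg_cancel]

namespace IsZMatrix

variable {M : Matrix n n ℝ} {v : n → ℂ} {μ : ℂ}

theorem rowSum_sub_re_mul_norm_le (hM : M.IsZMatrix) (hv : M.map (↑) *ᵥ v = μ • v) (i : n) :
    (∑ j, M i j - μ.re) * ‖v i‖ ≤ ∑ j ∈ univ.erase i, -M i j * (‖v j‖ - ‖v i‖) := by
  have heig : ((M i i : ℂ) - μ) * v i = -∑ j ∈ univ.erase i, (M i j : ℂ) * v j := by
    have := congrFun hv i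
    simp only [mulVec, dotProduct, map_apply, Pi.smul_apply, smul_eq_mul] at this
    rw [← add_sum_erase _ _ (mem_univ i)] at this
    linear_combination this
  have hdiag : (M i i - μ.re) * ‖v i‖ ≤ ∑ j ∈ univ.erase i, -M i j * ‖v j‖ :=
    calc (M i i - μ.re) * ‖v i‖ ≤ ‖(M i i : ℂ) - μ‖ * ‖v i‖ := by
          gcongr
          simpa using Complex.re_le_norm ((M i i : ℂ) - μ)
      _ = ‖∑ j ∈ univ.erase i, (M i j : ℂ) * v j‖ := by rw [← norm_mul, heig, norm_neg]
      _ ≤ ∑ j ∈ univ.erase i, ‖(M i j : ℂ) * v j‖ := norm_sum_le _ _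
      _ = ∑ j ∈ univ.erase i, -M i j * ‖v j‖ := sum_congr rfl fun j hj => by
          rw [norm_mul, Complex.norm_real, Real.norm_of_nonpos (neg_nonneg.mp (hM.neg_apply_nonneg (ne_of_mem_erase hj)))]
  rw [← add_sum_erase _ _ (mem_univ i)]
  simp only [mul_sub, sum_sub_distrib, ← sum_mul, sum_neg_distrib]
  linarith

theorem rowSum_le_re (hM : M.IsZMatrix) (hv : M.map (↑) *ᵥ v = μ • v) {i : n}
    (hmax : ∀ j, ‖v j‖ ≤ ‖v i‖) (hvi : v i ≠ 0) : ∑ j, M i j ≤ μ.re := by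
  have := (hM.rowSum_sub_re_mul_norm_le hv i).trans
    (sum_nonpos fun j hj => hM.neg_apply_mul_norm_sub_nonpos hmax (ne_of_mem_erase hj))
  exact sub_nonpos.mp (nonpos_of_mul_nonpos_left this (norm_pos_iff.mpr hvi))

theorem norm_eq_of_apply_neg (hM : M.IsZMatrix) (hv : M.map (↑) *ᵥ v = μ • v) {i j : n}
    (hmax : ∀ j, ‖v j‖ ≤ ‖v i‖) (hre : μ.re ≤ ∑ j, M i j) (hij : M i j < 0) :
    ‖v j‖ = ‖v i‖ := by
  rcases eq_or_ne j i with rfl | hji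
  · rfl
  have hterm : ∀ k ∈ univ.erase i, -M i k * (‖v k‖ - ‖v i‖) ≤ 0 := fun k hk =>
    hM.neg_apply_mul_norm_sub_nonpos hmax (ne_of_mem_erase hk)
  have hsum : ∑ k ∈ univ.erase i, -M i k * (‖v k‖ - ‖v i‖) = 0 :=
    le_antisymm (sum_nonpos hterm) ((mul_nonneg (sub_nonneg.mpr hre) (norm_nonneg _)).trans
      (hM.rowSum_sub_re_mul_norm_le hv i))
  have := (sum_eq_zero_iff_of_nonpos hterm).mp hsum j (mem_erase.mpr ⟨hji, mem_univ j⟩)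
  rcases mul_eq_zero.mp this with h | h <;> linarith

theorem re_pos_of_isRoot_charpoly (hM : M.IsZMatrix) (hrow : ∀ i, 0 ≤ ∑ j, M i j)
    (hchain : ∀ i, ∃ k, 0 < ∑ j, M k j ∧ Relation.ReflTransGen (fun j i => M i j < 0) k i)
    (hμ : (M.map (↑)).charpoly.IsRoot μ) : 0 < μ.re := by
  by_contra! hre
  obtain ⟨v, hv0, hv⟩ := exists_mulVec_eq_smul_of_isRoot_charpoly hμ
  obtain ⟨k, hk⟩ := Function.ne_iff.mp hv0
  obtain ⟨i₀, -, hi₀⟩ := exists_max_image univ (‖v ·‖) ⟨k, mem_univ k⟩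
  have hvi₀ : 0 < ‖v i₀‖ := (norm_pos_iff.mpr hk).trans_le (hi₀ k (mem_univ k))
  have hmax : ∀ i, ‖v i‖ = ‖v i₀‖ → ∀ j, ‖v j‖ ≤ ‖v i‖ := fun i hi j =>
    hi ▸ hi₀ j (mem_univ j)
  have hpred : ∀ r, Relation.ReflTransGen (fun j i => M i j < 0) r i₀ → ‖v r‖ = ‖v i₀‖ := by
    intro r hpath
    induction hpath using Relation.ReflTransGen.head_induction_on with
    | refl => rfl
    | head hedge _ ih =>
      exact (hM.norm_eq_of_apply_neg hv (hmax _ ih) (hre.trans (hrow _)) hedge).trans ih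
  obtain ⟨r, hr, hpath⟩ := hchain i₀
  have hvr := hpred r hpath
  have hvr0 : v r ≠ 0 := norm_pos_iff.mp (hvr ▸ hvi₀)
  linarith [hM.rowSum_le_re hv (hmax r hvr) hvr0]

end IsZMatrix

end Matrix

/-- If the weighted digraph on `{0,1,…,N}` (follower-follower
edges from `j` to `i` when `a i j > 0`, leader edges from `0` to `i` when
`d i > 0`) contains a directed spanning tree rooted at the leader `0`, then
every complex eigenvalue of `L + D` has positive real part; in particular
`L + D` is a nonsingular M-matrix (its off-diagonal entries are nonpositive). -/
theorem laplacian_plus_pinning_nonsingular_M_matrix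
    (N : ℕ)
    (a : Fin N → Fin N → ℝ)
    (ha : ∀ i j, i ≠ j → 0 ≤ a i j)
    (L : Matrix (Fin N) (Fin N) ℝ)
    (hLdiag : ∀ i, L i i = ∑ j ∈ Finset.univ.erase i, a i j)
    (hLoff : ∀ i j, i ≠ j → L i j = -(a i j))
    (d : Fin N → ℝ) (hd : ∀ i, 0 ≤ d i)
    (htree : ∀ i : Fin N,
      Relation.ReflTransGen
        (fun u v : Option (Fin N) =>
          match u, v with
          | none, some i => 0 < d i
          | some j, some i => 0 < a i j
          | _, none => False)
        none (some i)) :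
    (∀ μ : ℂ, ((L + Matrix.diagonal d).map Complex.ofReal).charpoly.IsRoot μ →
        0 < μ.re) ∧
    (∀ i j, i ≠ j → (L + Matrix.diagonal d) i j ≤ 0) := by
  set M := L + Matrix.diagonal d
  have hoff : ∀ i j, i ≠ j → M i j = -a i j := fun i j hij => by
    simp [M, hLoff i j hij, diagonal_apply_ne _ hij]
  have hrow : ∀ i, ∑ j, M i j = d i := fun i => by
    simp [M, sum_add_distrib, diagonal_apply, sum_apply_eq_zero_of_laplacian hLdiag hLoff i]
  have hZ : M.IsZMatrix := fun i j hij => hoff i j hij ▸ neg_nonpos.mpr (ha i j hij)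
  refine ⟨fun μ hμ => hZ.re_pos_of_isRoot_charpoly (fun i => hrow i ▸ hd i) (fun i => ?_) hμ, hZ⟩
  obtain ⟨k, hk, hpath⟩ := (htree i).exists_some_path_of_none
  refine ⟨k, hrow k ▸ hk, hpath.lift' id fun j i hji => ?_⟩
  rcases eq_or_ne j i with rfl | hne
  · exact .refl
  · exact .single (hoff i j hne.symm ▸ neg_lt_zero.mpr hji)
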